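/- arXiv:2104.11872 — 2 statements merged into one kernel-verified Lean document; each statement's English description precedes it below -/
import Mathlib

section
/- (L^p decorrelation estimate, special case p = 2 in one dimension) Let f, g : 𝕋 → ℝ be smooth functions on the torus 𝕋 = ℝ/2πℤ with g being (𝕋/κ)-periodic for some positive integer κ (i.e., g(x + 2π/κ) = g(x)). Then ‖fg‖_{L²(𝕋)} ≤ C (‖f‖_{L²} ‖g‖_{L²(avg)} + κ^{-1/2} ‖f‖_{C¹} ‖g‖_{L²(avg)}), where ‖g‖_{L²(avg)}² = (2π)^{-1}∫_𝕋 g² and C is a universal constant. -/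
open Real MeasureTheory

/-- sup bound for a continuous periodic function. -/
lemma aux_sup_bound (h : ℝ → ℝ) (hc : Continuous h) (hp : Function.Periodic h (2 * π)) (x : ℝ) :
    |h x| ≤ sSup (Set.range fun y => |h y|) := by
  have hp' : Function.Periodic (fun y => |h y|) (2 * π) := fun y => by simp [hp y]
  have himg : (fun y => |h y|) '' Set.Icc 0 (0 + 2 * π) = Set.range fun y => |h y| :=
    hp'.image_Icc Real.two_pi_pos 0
  have hbdd : BddAbove (Set.range fun y => |h y|) := by
    rw [← himg]
    exact (isCompact_Icc.image (continuous_abs.comp hc)).bddAbove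
  exact le_csSup hbdd (Set.mem_range_self x)

lemma aux_sqrt_add (a b : ℝ) (ha : 0 ≤ a) (hb : 0 ≤ b) :
    Real.sqrt (a + b) ≤ Real.sqrt a + Real.sqrt b := by
  have h1 : a + b ≤ (Real.sqrt a + Real.sqrt b) ^ 2 := by
    nlinarith [Real.sq_sqrt ha, Real.sq_sqrt hb, Real.sqrt_nonneg a, Real.sqrt_nonneg b,
      mul_nonneg (Real.sqrt_nonneg a) (Real.sqrt_nonneg b)]
  calc Real.sqrt (a + b) ≤ Real.sqrt ((Real.sqrt a + Real.sqrt b) ^ 2) := Real.sqrt_le_sqrt h1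
    _ = Real.sqrt a + Real.sqrt b := by
        rw [Real.sqrt_sq (by positivity)]

set_option maxHeartbeats 1000000 in
theorem stmt4 : ∃ C : ℝ, 0 < C ∧ ∀ (f g : ℝ → ℝ), ContDiff ℝ (⊤ : ℕ∞) f → ContDiff ℝ (⊤ : ℕ∞) g →
    Function.Periodic f (2 * π) → Function.Periodic g (2 * π) →
    ∀ κ : ℕ, 1 ≤ κ → Function.Periodic g (2 * π / κ) →
      (∫ x in (0:ℝ)..(2 * π), (f x * g x) ^ 2) ^ ((1:ℝ)/2) ≤
        C * ((∫ x in (0:ℝ)..(2 * π), (f x) ^ 2) ^ ((1:ℝ)/2) *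
              ((2 * π)⁻¹ * ∫ x in (0:ℝ)..(2 * π), (g x) ^ 2) ^ ((1:ℝ)/2)
          + (κ : ℝ) ^ (-(1:ℝ)/2) *
              (sSup (Set.range fun x => |f x|) + sSup (Set.range fun x => |deriv f x|)) *
              ((2 * π)⁻¹ * ∫ x in (0:ℝ)..(2 * π), (g x) ^ 2) ^ ((1:ℝ)/2)) := by
  refine ⟨7, by norm_num, ?_⟩
  intro f g hf hg hfp hgp κ hκ hgκ
  have hπ : (0:ℝ) < π := Real.pi_pos
  have hκ0 : (0:ℝ) < κ := by exact_mod_cast hκ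
  set T : ℝ := 2 * π / κ with hTdef
  have hT0 : 0 < T := by positivity
  have hfc : Continuous f := hf.continuous
  have hgc : Continuous g := hg.continuous
  have hfd : Differentiable ℝ f := hf.differentiable (by simp)
  have hfc' : Continuous (deriv f) := hf.continuous_deriv (by simp)
  -- periodicity of deriv f
  have hfp' : Function.Periodic (deriv f) (2 * π) := by
    intro x
    have h1 : (fun y => f (y + 2 * π)) = f := funext fun y => hfp y
    calc deriv f (x + 2 * π) = deriv (fun y => f (y + 2 * π)) x :=
          (deriv_comp_add_const f (2 * π) x).symm
      _ = deriv f x := by rw [h1]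
  set M₀ : ℝ := sSup (Set.range fun x => |f x|) with hM₀def
  set M₁ : ℝ := sSup (Set.range fun x => |deriv f x|) with hM₁def
  have hM₀ : ∀ x, |f x| ≤ M₀ := aux_sup_bound f hfc hfp
  have hM₁ : ∀ x, |deriv f x| ≤ M₁ := aux_sup_bound (deriv f) hfc' hfp'
  have hM₀0 : 0 ≤ M₀ := le_trans (abs_nonneg _) (hM₀ 0)
  have hM₁0 : 0 ≤ M₁ := le_trans (abs_nonneg _) (hM₁ 0)
  -- Lipschitz bound for f
  have hlip : ∀ x y : ℝ, |f x - f y| ≤ M₁ * |x - y| := by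
    intro x y
    have := Convex.norm_image_sub_le_of_norm_deriv_le (f := f) (C := M₁)
      (fun z _ => hfd z) (fun z _ => by simpa [Real.norm_eq_abs] using hM₁ z)
      convex_univ (Set.mem_univ y) (Set.mem_univ x)
    simpa [Real.norm_eq_abs] using this
  -- squared Lipschitz bound
  have hsqlip : ∀ x y : ℝ, f x ^ 2 ≤ f y ^ 2 + 2 * M₀ * M₁ * |x - y| := by
    intro x y
    have h1 : |f x - f y| ≤ M₁ * |x - y| := hlip x y
    have h2 : |f x + f y| ≤ 2 * M₀ :=
      (abs_add_le _ _).trans (by linarith [hM₀ x, hM₀ y])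
    have h3 : f x ^ 2 - f y ^ 2 = (f x - f y) * (f x + f y) := by ring
    have h4 : f x ^ 2 - f y ^ 2 ≤ |f x - f y| * |f x + f y| := by
      rw [h3]; exact le_trans (le_abs_self _) (le_of_eq (abs_mul _ _))
    nlinarith [abs_nonneg (f x - f y), abs_nonneg (x - y), abs_nonneg (f x + f y),
      mul_le_mul h1 h2 (abs_nonneg _) (mul_nonneg hM₁0 (abs_nonneg _))]
  -- integrability facts
  have hint : ∀ (h : ℝ → ℝ), Continuous h → ∀ a b : ℝ,
      IntervalIntegrable h volume a b := fun h hc a b => hc.intervalIntegrable a b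
  set G : ℝ := ∫ x in (0:ℝ)..(2 * π), (g x) ^ 2 with hGdef
  set F : ℝ := ∫ x in (0:ℝ)..(2 * π), (f x) ^ 2 with hFdef
  set L : ℝ := ∫ x in (0:ℝ)..(2 * π), (f x * g x) ^ 2 with hLdef
  have hG0 : 0 ≤ G := intervalIntegral.integral_nonneg (by positivity)
    (fun x _ => sq_nonneg _)
  have hF0 : 0 ≤ F := intervalIntegral.integral_nonneg (by positivity)
    (fun x _ => sq_nonneg _)
  have hL0 : 0 ≤ L := intervalIntegral.integral_nonneg (by positivity)
    (fun x _ => sq_nonneg _)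
  -- partition points
  set a : ℕ → ℝ := fun i => i * T with hadef
  have haT : ∀ i : ℕ, a (i + 1) = a i + T := by
    intro i; simp only [hadef]; push_cast; ring
  have haκ : a κ = 2 * π := by
    simp only [hadef, hTdef]; field_simp
  have ha0 : a 0 = 0 := by simp [hadef]
  -- g² is T-periodic
  have hg2p : Function.Periodic (fun x => (g x) ^ 2) T := fun x => by simp [hgκ x]
  -- each small g²-integral equals the one over [0,T]
  have hgG : ∀ i : ℕ, (∫ x in (a i)..(a (i + 1)), (g x) ^ 2) = ∫ x in (0:ℝ)..T, (g x) ^ 2 := by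
    intro i
    have := hg2p.intervalIntegral_add_eq (a i) 0
    rwa [← haT i, zero_add] at this
  -- total g² integral
  have hGsum : (κ : ℝ) * (∫ x in (0:ℝ)..T, (g x) ^ 2) = G := by
    have hsum : (∑ i ∈ Finset.range κ, ∫ x in (a i)..(a (i + 1)), (g x) ^ 2)
        = ∫ x in (a 0)..(a κ), (g x) ^ 2 :=
      intervalIntegral.sum_integral_adjacent_intervals
        (fun i _ => hint _ (hgc.pow 2) _ _)
    rw [ha0, haκ] at hsum
    rw [hGdef, ← hsum]
    simp [hgG, Finset.sum_const]
  have hGi : ∀ i : ℕ, (∫ x in (a i)..(a (i + 1)), (g x) ^ 2) = G / κ := by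
    intro i
    rw [hgG i, eq_div_iff (ne_of_gt hκ0), mul_comm]
    exact hGsum
  have hGi0 : 0 ≤ G / κ := by positivity
  -- pointwise bound for f² on each interval
  have hV : ∀ i : ℕ, ∀ x ∈ Set.Icc (a i) (a (i + 1)),
      f x ^ 2 ≤ (κ / (2 * π)) * (∫ y in (a i)..(a (i + 1)), f y ^ 2) + 2 * M₀ * M₁ * T := by
    intro i x hx
    -- integrate the inequality f x ^ 2 ≤ f y ^ 2 + 2M₀M₁T over y in the interval
    have hxy : ∀ y ∈ Set.Icc (a i) (a (i + 1)), f x ^ 2 ≤ f y ^ 2 + 2 * M₀ * M₁ * T := by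
      intro y hy
      have hd : |x - y| ≤ T := by
        rw [abs_sub_le_iff]
        constructor <;> [skip; skip] <;>
          · have h1 := hx.1; have h2 := hx.2; have h3 := hy.1; have h4 := hy.2
            rw [haT i] at h2 h4; linarith
      calc f x ^ 2 ≤ f y ^ 2 + 2 * M₀ * M₁ * |x - y| := hsqlip x y
        _ ≤ f y ^ 2 + 2 * M₀ * M₁ * T := by
            have : 2 * M₀ * M₁ * |x - y| ≤ 2 * M₀ * M₁ * T :=
              mul_le_mul_of_nonneg_left hd (by positivity)
            linarith
    have hii : (∫ y in (a i)..(a (i + 1)), (f x ^ 2 : ℝ)) ≤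
        ∫ y in (a i)..(a (i + 1)), (f y ^ 2 + 2 * M₀ * M₁ * T) := by
      apply intervalIntegral.integral_mono_on (by rw [haT i]; linarith)
        intervalIntegrable_const
        ((hint _ (hfc.pow 2) _ _).add intervalIntegrable_const) hxy
    rw [intervalIntegral.integral_const,
      intervalIntegral.integral_add (hint (fun x => f x ^ 2) (hfc.pow 2) _ _) intervalIntegrable_const,
      intervalIntegral.integral_const] at hii
    rw [haT i] at hii
    simp only [add_sub_cancel_left, smul_eq_mul] at hii
    have hTκ : (κ / (2 * π)) * T = 1 := by
      rw [hTdef]; field_simp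
    have := mul_le_mul_of_nonneg_left hii (le_of_lt (by positivity : (0:ℝ) < κ / (2 * π)))
    rw [← haT i] at this
    calc f x ^ 2 = (κ / (2 * π)) * (T * f x ^ 2) := by
          rw [← mul_assoc, mul_comm (κ / (2 * π)) T, mul_comm T (κ / (2*π)), hTκ, one_mul]
      _ ≤ (κ / (2 * π)) * ((∫ y in (a i)..(a (i + 1)), f y ^ 2) + T * (2 * M₀ * M₁ * T)) := this
      _ ≤ (κ / (2 * π)) * (∫ y in (a i)..(a (i + 1)), f y ^ 2) + 2 * M₀ * M₁ * T := by
          rw [mul_add]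
          have : (κ / (2 * π)) * (T * (2 * M₀ * M₁ * T)) = 2 * M₀ * M₁ * T := by
            rw [← mul_assoc, mul_comm (κ / (2*π)) T, mul_comm T (κ / (2*π)), hTκ, one_mul]
          rw [this]
  -- bound each interval's contribution
  have hkey : ∀ i : ℕ, (∫ x in (a i)..(a (i + 1)), (f x * g x) ^ 2) ≤
      ((κ / (2 * π)) * (∫ y in (a i)..(a (i + 1)), f y ^ 2) + 2 * M₀ * M₁ * T) * (G / κ) := by
    intro i
    have hab : a i ≤ a (i + 1) := by rw [haT i]; linarith
    set B : ℝ := (κ / (2 * π)) * (∫ y in (a i)..(a (i + 1)), f y ^ 2) + 2 * M₀ * M₁ * T with hBdef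
    have hmono : (∫ x in (a i)..(a (i + 1)), (f x * g x) ^ 2) ≤
        ∫ x in (a i)..(a (i + 1)), B * (g x) ^ 2 := by
      apply intervalIntegral.integral_mono_on hab
        (hint _ ((hfc.mul hgc).pow 2) _ _)
        (hint _ (continuous_const.mul (hgc.pow 2)) _ _)
      intro x hx
      have := hV i x hx
      rw [mul_pow]
      exact mul_le_mul_of_nonneg_right this (sq_nonneg _)
    rw [intervalIntegral.integral_const_mul, hGi i] at hmono
    exact hmono
  -- sum up
  have hLsum : L = ∑ i ∈ Finset.range κ, ∫ x in (a i)..(a (i + 1)), (f x * g x) ^ 2 := by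
    rw [intervalIntegral.sum_integral_adjacent_intervals
      (fun i _ => hint (fun x => (f x * g x) ^ 2) ((hfc.mul hgc).pow 2) _ _), ha0, haκ]
  have hFsum : (∑ i ∈ Finset.range κ, ∫ x in (a i)..(a (i + 1)), (f x) ^ 2) = F := by
    rw [intervalIntegral.sum_integral_adjacent_intervals
      (fun i _ => hint (fun x => f x ^ 2) (hfc.pow 2) _ _), ha0, haκ]
  have hLbound : L ≤ F * G / (2 * π) + 2 * M₀ * M₁ * T * G := by
    rw [hLsum]
    calc (∑ i ∈ Finset.range κ, ∫ x in (a i)..(a (i + 1)), (f x * g x) ^ 2)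
        ≤ ∑ i ∈ Finset.range κ,
            ((κ / (2 * π)) * (∫ y in (a i)..(a (i + 1)), f y ^ 2) + 2 * M₀ * M₁ * T) * (G / κ) :=
          Finset.sum_le_sum (fun i _ => hkey i)
      _ = F * G / (2 * π) + 2 * M₀ * M₁ * T * G := by
          rw [← Finset.sum_mul, Finset.sum_add_distrib, ← Finset.mul_sum, hFsum,
            Finset.sum_const, Finset.card_range]
          field_simp
          ring
  -- replace 2M₀M₁ by (M₀+M₁)²
  set M : ℝ := M₀ + M₁ with hMdef
  have hM0 : 0 ≤ M := by positivity
  have hLbound2 : L ≤ F * ((2 * π)⁻¹ * G) + (2 * π) ^ 2 * (κ : ℝ)⁻¹ * M ^ 2 * ((2 * π)⁻¹ * G) := by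
    have h2 : 2 * M₀ * M₁ ≤ M ^ 2 := by nlinarith [sq_nonneg (M₀ - M₁)]
    have h3 : 2 * M₀ * M₁ * T * G ≤ M ^ 2 * T * G :=
      mul_le_mul_of_nonneg_right (mul_le_mul_of_nonneg_right h2 (le_of_lt hT0)) hG0
    calc L ≤ F * G / (2 * π) + 2 * M₀ * M₁ * T * G := hLbound
      _ ≤ F * G / (2 * π) + M ^ 2 * T * G := add_le_add_right h3 _
      _ = F * ((2 * π)⁻¹ * G) + (2 * π) ^ 2 * (κ : ℝ)⁻¹ * M ^ 2 * ((2 * π)⁻¹ * G) := by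
          rw [hTdef]; field_simp
  -- take square roots
  set Q : ℝ := (2 * π)⁻¹ * G with hQdef
  have hQ0 : 0 ≤ Q := by positivity
  have hsqrtL : L ^ ((1:ℝ)/2) ≤
      Real.sqrt (F * Q) + Real.sqrt ((2 * π) ^ 2 * (κ : ℝ)⁻¹ * M ^ 2 * Q) := by
    rw [← Real.sqrt_eq_rpow]
    calc Real.sqrt L ≤ Real.sqrt (F * Q + (2 * π) ^ 2 * (κ : ℝ)⁻¹ * M ^ 2 * Q) :=
          Real.sqrt_le_sqrt hLbound2
      _ ≤ Real.sqrt (F * Q) + Real.sqrt ((2 * π) ^ 2 * (κ : ℝ)⁻¹ * M ^ 2 * Q) :=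
          aux_sqrt_add _ _ (mul_nonneg hF0 hQ0) (by positivity)
  have hs1 : Real.sqrt (F * Q) = F ^ ((1:ℝ)/2) * Q ^ ((1:ℝ)/2) := by
    rw [Real.sqrt_mul hF0, Real.sqrt_eq_rpow, Real.sqrt_eq_rpow]
  have hs2 : Real.sqrt ((2 * π) ^ 2 * (κ : ℝ)⁻¹ * M ^ 2 * Q)
      = (2 * π) * ((κ : ℝ) ^ (-(1:ℝ)/2) * M * Q ^ ((1:ℝ)/2)) := by
    rw [show (2 * π) ^ 2 * (κ : ℝ)⁻¹ * M ^ 2 * Q = ((2*π) * M) ^ 2 * ((κ:ℝ)⁻¹ * Q) by ring,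
      Real.sqrt_mul (sq_nonneg _), Real.sqrt_sq (by positivity),
      Real.sqrt_mul (by positivity), Real.sqrt_eq_rpow Q]
    have : Real.sqrt (κ : ℝ)⁻¹ = (κ : ℝ) ^ (-(1:ℝ)/2) := by
      rw [show (-(1:ℝ)/2) = -(1/2:ℝ) by ring, Real.rpow_neg (le_of_lt hκ0),
        Real.sqrt_inv, Real.sqrt_eq_rpow]
    rw [this]; ring
  rw [hs1, hs2] at hsqrtL
  have hfinal : F ^ ((1:ℝ)/2) * Q ^ ((1:ℝ)/2)
      + (2 * π) * ((κ : ℝ) ^ (-(1:ℝ)/2) * M * Q ^ ((1:ℝ)/2))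
      ≤ 7 * (F ^ ((1:ℝ)/2) * Q ^ ((1:ℝ)/2) + (κ : ℝ) ^ (-(1:ℝ)/2) * M * Q ^ ((1:ℝ)/2)) := by
    have hπ7 : 2 * π ≤ 7 := by nlinarith [Real.pi_lt_d2]
    have t1 : 0 ≤ F ^ ((1:ℝ)/2) * Q ^ ((1:ℝ)/2) := by positivity
    have t2 : 0 ≤ (κ : ℝ) ^ (-(1:ℝ)/2) * M * Q ^ ((1:ℝ)/2) := by positivity
    nlinarith
  calc L ^ ((1:ℝ)/2) ≤ _ := hsqrtL
    _ ≤ _ := hfinal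
end

section
/- For every N ∈ ℕ there exist ε > 0 and pairwise disjoint finite sets Λ_i ⊂ 𝕊² ∩ ℚ³ for i = 1,…,N, with each ξ ∈ Λ_i equipped with vectors ξ₁, ξ₂ making (ξ, ξ₁, ξ₂) an orthonormal basis, and smooth functions γ_ξ on the ε-ball of skew-symmetric 3×3 matrices, such that every skew-symmetric 3×3 matrix R with |R| < ε satisfies R = Σ_{ξ∈Λ_i} γ_ξ(R)² (ξ₂ ⊗ ξ - ξ ⊗ ξ₂) for each i = 1,…,N. -/
noncomputable section Stmt16Aux

private abbrev E3' := EuclideanSpace ℝ (Fin 3)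
private abbrev E9' := EuclideanSpace ℝ (Fin 3 × Fin 3)

private def vec' (a b c : ℝ) : E3' := (WithLp.equiv 2 _).symm ![a,b,c]

@[simp] private lemma vec'_0 (a b c : ℝ) : vec' a b c 0 = a := rfl
@[simp] private lemma vec'_1 (a b c : ℝ) : vec' a b c 1 = b := rfl
@[simp] private lemma vec'_2 (a b c : ℝ) : vec' a b c 2 = c := rfl

private lemma vec'_inj {a b c d e f : ℝ} (h : vec' a b c = vec' d e f) :
    a = d ∧ b = e ∧ c = f :=
  ⟨congrArg (· 0) h, congrArg (· 1) h, congrArg (· 2) h⟩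

private lemma norm_vec' (a b c : ℝ) (h : a^2 + b^2 + c^2 = 1) : ‖vec' a b c‖ = 1 := by
  rw [EuclideanSpace.norm_eq, Fin.sum_univ_three]
  simp only [vec'_0, vec'_1, vec'_2, Real.norm_eq_abs, sq_abs]
  rw [h, Real.sqrt_one]

private lemma inner_vec' (a b c d e f : ℝ) :
    (inner ℝ (vec' a b c) (vec' d e f) : ℝ) = a*d + b*e + c*f := by
  rw [PiLp.inner_apply, Fin.sum_univ_three]; simp [RCLike.inner_apply]; ring

private lemma coord_le' (R : E9') (m : Fin 3 × Fin 3) : |R m| ≤ ‖R‖ := by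
  rw [EuclideanSpace.norm_eq]
  rw [show |R m| = Real.sqrt (‖R m‖^2) by
    rw [Real.sqrt_sq (norm_nonneg _)]; exact (Real.norm_eq_abs _).symm]
  exact Real.sqrt_le_sqrt
    (Finset.single_le_sum (fun i _ => sq_nonneg (‖R i‖)) (Finset.mem_univ m))

private def tt' (n : ℕ) : ℝ := 1/(n+3)
private def ss' (n : ℕ) : ℝ := 2 * tt' n / (1 + tt' n ^ 2)
private def cc' (n : ℕ) : ℝ := (1 - tt' n ^ 2) / (1 + tt' n ^ 2)

private lemma tt'_pos (n : ℕ) : 0 < tt' n := by rw [tt']; positivity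
private lemma tt'_le (n : ℕ) : tt' n ≤ 1/3 := by
  rw [tt', div_le_div_iff₀ (by positivity) (by norm_num)]
  linarith [Nat.cast_nonneg (α := ℝ) n]
private lemma one_add_sq_pos' (n : ℕ) : (0:ℝ) < 1 + tt' n ^ 2 := by positivity

private lemma ss'_pos (n : ℕ) : 0 < ss' n := by
  have h1 := tt'_pos n; have h2 := one_add_sq_pos' n
  rw [ss']; positivity

private lemma cs_sq' (n : ℕ) : cc' n ^ 2 + ss' n ^ 2 = 1 := by
  have h := (one_add_sq_pos' n).ne'
  rw [cc', ss']; field_simp; ring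

private lemma ss'_le (n : ℕ) : ss' n ≤ 3/5 := by
  have h1 := tt'_pos n; have h2 := tt'_le n; have h3 := one_add_sq_pos' n
  rw [ss', div_le_iff₀ h3]; nlinarith

private lemma cc'_ge (n : ℕ) : 4/5 ≤ cc' n := by
  have h1 := tt'_pos n; have h2 := tt'_le n; have h3 := one_add_sq_pos' n
  rw [cc', le_div_iff₀ h3]; nlinarith

private lemma cc'_pos (n : ℕ) : 0 < cc' n :=
  lt_of_lt_of_le (by norm_num) (cc'_ge n)
private lemma ss'_lt_cc' (m n : ℕ) : ss' m < cc' n :=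
  lt_of_le_of_lt (ss'_le m) (lt_of_lt_of_le (by norm_num) (cc'_ge n))

private lemma ss'_inj {m n : ℕ} (h : ss' m = ss' n) : m = n := by
  have h1 := tt'_pos m; have h2 := tt'_le m; have h3 := one_add_sq_pos' m
  have h4 := tt'_pos n; have h5 := tt'_le n; have h6 := one_add_sq_pos' n
  rw [ss', ss', div_eq_div_iff h3.ne' h6.ne'] at h
  have hfac : (tt' m - tt' n) * (1 - tt' m * tt' n) = 0 := by linear_combination h/2
  have ht : tt' m = tt' n := by
    rcases mul_eq_zero.mp hfac with h7 | h7
    · linarith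
    · nlinarith
  rw [tt', tt', div_eq_div_iff (by positivity) (by positivity)] at ht
  have : (m:ℝ) = n := by linarith
  exact_mod_cast this

private lemma cc'_inj {m n : ℕ} (h : cc' m = cc' n) : m = n := by
  apply ss'_inj
  have h1 := cs_sq' m; have h2 := cs_sq' n
  have h3 := ss'_pos m; have h4 := ss'_pos n
  have hfac : (ss' m - ss' n) * (ss' m + ss' n) = 0 := by
    linear_combination h1 - h2 - (cc' m + cc' n) * h
  rcases mul_eq_zero.mp hfac with h7 | h7
  · linarith
  · linarith

private lemma ss'_rat (n : ℕ) : ∃ q : ℚ, ss' n = (q:ℝ) := by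
  refine ⟨2 * (1/(n+3)) / (1 + (1/(n+3))^2), ?_⟩
  rw [ss', tt']; push_cast; norm_num

private lemma cc'_rat (n : ℕ) : ∃ q : ℚ, cc' n = (q:ℝ) := by
  refine ⟨(1 - (1/(n+3))^2) / (1 + (1/(n+3))^2), ?_⟩
  rw [cc', tt']; push_cast; norm_num

/-- The six vectors of family `n`. -/
private def Xi' (n : ℕ) : Fin 6 → E3' :=
  ![vec' (cc' n) (ss' n) 0, vec' (ss' n) (cc' n) 0,
    vec' 0 (cc' n) (ss' n), vec' 0 (ss' n) (cc' n),
    vec' (cc' n) 0 (ss' n), vec' (ss' n) 0 (cc' n)]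

private lemma Xi'_0 (n : ℕ) : Xi' n 0 = vec' (cc' n) (ss' n) 0 := rfl
private lemma Xi'_1 (n : ℕ) : Xi' n 1 = vec' (ss' n) (cc' n) 0 := rfl
private lemma Xi'_2 (n : ℕ) : Xi' n 2 = vec' 0 (cc' n) (ss' n) := rfl
private lemma Xi'_3 (n : ℕ) : Xi' n 3 = vec' 0 (ss' n) (cc' n) := rfl
private lemma Xi'_4 (n : ℕ) : Xi' n 4 = vec' (cc' n) 0 (ss' n) := rfl
private lemma Xi'_5 (n : ℕ) : Xi' n 5 = vec' (ss' n) 0 (cc' n) := rfl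

private def V1' (ξ : E3') : E3' :=
  if ξ 0 = 0 then vec' 1 0 0 else if ξ 1 = 0 then vec' 0 1 0 else vec' 0 0 1

private def V2' (ξ : E3') : E3' :=
  if ξ 0 = 0 then (if ξ 2 < ξ 1 then vec' 0 (-ξ 2) (ξ 1) else vec' 0 (ξ 2) (-(ξ 1)))
  else if ξ 1 = 0 then (if ξ 2 < ξ 0 then vec' (-ξ 2) 0 (ξ 0) else vec' (ξ 2) 0 (-(ξ 0)))
  else (if ξ 1 < ξ 0 then vec' (-ξ 1) (ξ 0) 0 else vec' (ξ 1) (-(ξ 0)) 0)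

private def gam' (ξ : E3') (R : E9') : ℝ :=
  if ξ 0 = 0 then (if ξ 2 < ξ 1 then Real.sqrt (1 + R (2,1)) else 1)
  else if ξ 1 = 0 then (if ξ 2 < ξ 0 then Real.sqrt (1 + R (2,0)) else 1)
  else (if ξ 1 < ξ 0 then Real.sqrt (1 + R (1,0)) else 1)

private lemma V1'_Xi' (n : ℕ) (p : Fin 6) : V1' (Xi' n p) =
    ![vec' 0 0 1, vec' 0 0 1, vec' 1 0 0, vec' 1 0 0, vec' 0 1 0, vec' 0 1 0] p := by
  have h1 := ss'_pos n; have h2 := cc'_pos n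
  fin_cases p <;> (simp [V1', Xi'_0, Xi'_1, Xi'_2, Xi'_3, Xi'_4, Xi'_5, h1.ne', h2.ne']) <;> rfl

private lemma V2'_Xi' (n : ℕ) (p : Fin 6) : V2' (Xi' n p) =
    ![vec' (-ss' n) (cc' n) 0, vec' (cc' n) (-ss' n) 0,
      vec' 0 (-ss' n) (cc' n), vec' 0 (cc' n) (-ss' n),
      vec' (-ss' n) 0 (cc' n), vec' (cc' n) 0 (-ss' n)] p := by
  have h1 := ss'_pos n; have h2 := cc'_pos n; have h3 := ss'_lt_cc' n n
  fin_cases p <;> (simp [V2', Xi'_0, Xi'_1, Xi'_2, Xi'_3, Xi'_4, Xi'_5, h1.ne', h2.ne', h3,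
      not_lt.mpr h3.le, h1.not_gt, h2.not_gt]) <;> rfl

private lemma gam'_Xi' (n : ℕ) (R : E9') (p : Fin 6) : gam' (Xi' n p) R =
    ![Real.sqrt (1 + R (1,0)), 1, Real.sqrt (1 + R (2,1)), 1,
      Real.sqrt (1 + R (2,0)), 1] p := by
  have h1 := ss'_pos n; have h2 := cc'_pos n; have h3 := ss'_lt_cc' n n
  fin_cases p <;> (simp [gam', Xi'_0, Xi'_1, Xi'_2, Xi'_3, Xi'_4, Xi'_5, h1.ne', h2.ne', h3,
      not_lt.mpr h3.le, h1.not_gt, h2.not_gt]) <;> rfl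

private lemma V1X0 (n : ℕ) : V1' (Xi' n 0) = vec' 0 0 1 := (V1'_Xi' n 0).trans rfl
private lemma V1X1 (n : ℕ) : V1' (Xi' n 1) = vec' 0 0 1 := (V1'_Xi' n 1).trans rfl
private lemma V1X2 (n : ℕ) : V1' (Xi' n 2) = vec' 1 0 0 := (V1'_Xi' n 2).trans rfl
private lemma V1X3 (n : ℕ) : V1' (Xi' n 3) = vec' 1 0 0 := (V1'_Xi' n 3).trans rfl
private lemma V1X4 (n : ℕ) : V1' (Xi' n 4) = vec' 0 1 0 := (V1'_Xi' n 4).trans rfl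
private lemma V1X5 (n : ℕ) : V1' (Xi' n 5) = vec' 0 1 0 := (V1'_Xi' n 5).trans rfl

private lemma V2X0 (n : ℕ) : V2' (Xi' n 0) = vec' (-ss' n) (cc' n) 0 := (V2'_Xi' n 0).trans rfl
private lemma V2X1 (n : ℕ) : V2' (Xi' n 1) = vec' (cc' n) (-ss' n) 0 := (V2'_Xi' n 1).trans rfl
private lemma V2X2 (n : ℕ) : V2' (Xi' n 2) = vec' 0 (-ss' n) (cc' n) := (V2'_Xi' n 2).trans rfl
private lemma V2X3 (n : ℕ) : V2' (Xi' n 3) = vec' 0 (cc' n) (-ss' n) := (V2'_Xi' n 3).trans rfl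
private lemma V2X4 (n : ℕ) : V2' (Xi' n 4) = vec' (-ss' n) 0 (cc' n) := (V2'_Xi' n 4).trans rfl
private lemma V2X5 (n : ℕ) : V2' (Xi' n 5) = vec' (cc' n) 0 (-ss' n) := (V2'_Xi' n 5).trans rfl

private lemma gX0 (n : ℕ) (R : E9') : gam' (Xi' n 0) R = Real.sqrt (1 + R (1,0)) := (gam'_Xi' n R 0).trans rfl
private lemma gX1 (n : ℕ) (R : E9') : gam' (Xi' n 1) R = 1 := (gam'_Xi' n R 1).trans rfl
private lemma gX2 (n : ℕ) (R : E9') : gam' (Xi' n 2) R = Real.sqrt (1 + R (2,1)) := (gam'_Xi' n R 2).trans rfl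
private lemma gX3 (n : ℕ) (R : E9') : gam' (Xi' n 3) R = 1 := (gam'_Xi' n R 3).trans rfl
private lemma gX4 (n : ℕ) (R : E9') : gam' (Xi' n 4) R = Real.sqrt (1 + R (2,0)) := (gam'_Xi' n R 4).trans rfl
private lemma gX5 (n : ℕ) (R : E9') : gam' (Xi' n 5) R = 1 := (gam'_Xi' n R 5).trans rfl


private lemma Xi'_eq {m n : ℕ} {p r : Fin 6} (h : Xi' m p = Xi' n r) :
    m = n ∧ p = r := by
  have h1m := ss'_pos m; have h2m := cc'_pos m
  have h1n := ss'_pos n; have h2n := cc'_pos n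
  have hmn := ss'_lt_cc' m n; have hnm := ss'_lt_cc' n m
  have hmm := ss'_lt_cc' m m; have hnn := ss'_lt_cc' n n
  fin_cases p <;> fin_cases r <;>
    rw [show (Xi' m _ = Xi' n _) = _ from rfl] at h <;>
    simp only [Xi'_0, Xi'_1, Xi'_2, Xi'_3, Xi'_4, Xi'_5] at h <;>
    obtain ⟨ha, hb, hc⟩ := vec'_inj h <;>
    first
      | exact ⟨cc'_inj ha, rfl⟩
      | exact ⟨cc'_inj hb, rfl⟩
      | exact ⟨cc'_inj hc, rfl⟩
      | exact ⟨ss'_inj ha, rfl⟩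
      | exact ⟨ss'_inj hb, rfl⟩
      | exact ⟨ss'_inj hc, rfl⟩
      | exact absurd ha (ne_of_gt (by linarith))
      | exact absurd ha (ne_of_lt (by linarith))
      | exact absurd hb (ne_of_gt (by linarith))
      | exact absurd hb (ne_of_lt (by linarith))
      | exact absurd hc (ne_of_gt (by linarith))
      | exact absurd hc (ne_of_lt (by linarith))

private lemma contDiffOn_branch (m : Fin 3 × Fin 3) :
    ContDiffOn ℝ (⊤ : ℕ∞) (fun R : E9' => Real.sqrt (1 + R m)) {R : E9' | ‖R‖ < 1/2} := by
  intro R hR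
  have hb : |R m| < 1/2 := lt_of_le_of_lt (coord_le' R m) hR
  have h : 1 + R m ≠ 0 := by
    have := abs_lt.mp hb; intro h0; linarith [this.1]
  exact ((Real.contDiffAt_sqrt h).comp R
    ((contDiff_const.add (EuclideanSpace.proj (𝕜 := ℝ) m : E9' →L[ℝ] ℝ).contDiff).contDiffAt)).contDiffWithinAt


private lemma contDiff_gam' (n : ℕ) (p : Fin 6) :
    ContDiffOn ℝ (⊤ : ℕ∞) (gam' (Xi' n p)) {R : E9' | ‖R‖ < 1/2} := by
  fin_cases p
  · exact (contDiffOn_branch (1,0)).congr fun R _ => gX0 n R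
  · exact contDiffOn_const.congr fun R _ => gX1 n R
  · exact (contDiffOn_branch (2,1)).congr fun R _ => gX2 n R
  · exact contDiffOn_const.congr fun R _ => gX3 n R
  · exact (contDiffOn_branch (2,0)).congr fun R _ => gX4 n R
  · exact contDiffOn_const.congr fun R _ => gX5 n R

private def P' (x y z : E3') : Prop :=
  (∀ m, ∃ q : ℚ, x m = (q:ℝ)) ∧ ‖x‖ = 1 ∧ ‖y‖ = 1 ∧ ‖z‖ = 1 ∧
  (inner ℝ x y : ℝ) = 0 ∧ (inner ℝ x z : ℝ) = 0 ∧ (inner ℝ y z : ℝ) = 0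

private lemma block' (a b c d e f g h i : ℝ)
    (hx : a^2+b^2+c^2 = 1) (h1 : d^2+e^2+f^2 = 1) (h2 : g^2+h^2+i^2 = 1)
    (o1 : a*d+b*e+c*f = 0) (o2 : a*g+b*h+c*i = 0) (o3 : d*g+e*h+f*i = 0)
    (hqa : ∃ q:ℚ, a = (q:ℝ)) (hqb : ∃ q:ℚ, b = (q:ℝ)) (hqc : ∃ q:ℚ, c = (q:ℝ)) :
    P' (vec' a b c) (vec' d e f) (vec' g h i) := by
  refine ⟨?_, norm_vec' _ _ _ hx, norm_vec' _ _ _ h1, norm_vec' _ _ _ h2,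
    by rw [inner_vec']; exact o1, by rw [inner_vec']; exact o2, by rw [inner_vec']; exact o3⟩
  intro m; fin_cases m; exacts [hqa, hqb, hqc]

private lemma facts' (n : ℕ) (p : Fin 6) :
    P' (Xi' n p) (V1' (Xi' n p)) (V2' (Xi' n p)) := by
  have hcs := cs_sq' n
  have hq0 : ∃ q : ℚ, (0:ℝ) = (q:ℝ) := ⟨0, by norm_num⟩
  have hqc := cc'_rat n
  have hqs := ss'_rat n
  fin_cases p
  · show P' (Xi' n 0) (V1' (Xi' n 0)) (V2' (Xi' n 0))
    rw [V1X0 n, V2X0 n, Xi'_0]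
    exact block' _ _ _ _ _ _ _ _ _ (by linear_combination hcs) (by norm_num)
      (by linear_combination hcs) (by ring) (by ring) (by ring) hqc hqs hq0
  · show P' (Xi' n 1) (V1' (Xi' n 1)) (V2' (Xi' n 1))
    rw [V1X1 n, V2X1 n, Xi'_1]
    exact block' _ _ _ _ _ _ _ _ _ (by linear_combination hcs) (by norm_num)
      (by linear_combination hcs) (by ring) (by ring) (by ring) hqs hqc hq0
  · show P' (Xi' n 2) (V1' (Xi' n 2)) (V2' (Xi' n 2))
    rw [V1X2 n, V2X2 n, Xi'_2]
    exact block' _ _ _ _ _ _ _ _ _ (by linear_combination hcs) (by norm_num)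
      (by linear_combination hcs) (by ring) (by ring) (by ring) hq0 hqc hqs
  · show P' (Xi' n 3) (V1' (Xi' n 3)) (V2' (Xi' n 3))
    rw [V1X3 n, V2X3 n, Xi'_3]
    exact block' _ _ _ _ _ _ _ _ _ (by linear_combination hcs) (by norm_num)
      (by linear_combination hcs) (by ring) (by ring) (by ring) hq0 hqs hqc
  · show P' (Xi' n 4) (V1' (Xi' n 4)) (V2' (Xi' n 4))
    rw [V1X4 n, V2X4 n, Xi'_4]
    exact block' _ _ _ _ _ _ _ _ _ (by linear_combination hcs) (by norm_num)
      (by linear_combination hcs) (by ring) (by ring) (by ring) hqc hq0 hqs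
  · show P' (Xi' n 5) (V1' (Xi' n 5)) (V2' (Xi' n 5))
    rw [V1X5 n, V2X5 n, Xi'_5]
    exact block' _ _ _ _ _ _ _ _ _ (by linear_combination hcs) (by norm_num)
      (by linear_combination hcs) (by ring) (by ring) (by ring) hqs hq0 hqc

end Stmt16Aux

set_option maxHeartbeats 1000000 in
/-- Geometric lemma: for every `N` there are `N` pairwise disjoint families of rational unit
vectors `ξ` with completed orthonormal bases `(ξ, ξ₁, ξ₂)`, such that every small
skew-symmetric 3×3 matrix `R` is represented as
`R = ∑_{ξ ∈ Λ_i} γ_ξ(R)² (ξ₂ ⊗ ξ - ξ ⊗ ξ₂)` for each `i`. -/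
theorem stmt16 (N : ℕ) : ∃ ε : ℝ, 0 < ε ∧
    ∃ Λ : Fin N → Finset (EuclideanSpace ℝ (Fin 3)),
    ∃ v1 v2 : EuclideanSpace ℝ (Fin 3) → EuclideanSpace ℝ (Fin 3),
    ∃ γ : EuclideanSpace ℝ (Fin 3) → EuclideanSpace ℝ (Fin 3 × Fin 3) → ℝ,
    (∀ i j : Fin N, i ≠ j → Disjoint (Λ i) (Λ j)) ∧
    (∀ i : Fin N, ∀ ξ ∈ Λ i,
      (∀ m, ∃ q : ℚ, ξ m = (q : ℝ)) ∧
      ‖ξ‖ = 1 ∧ ‖v1 ξ‖ = 1 ∧ ‖v2 ξ‖ = 1 ∧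
      (inner ℝ ξ (v1 ξ) : ℝ) = 0 ∧ (inner ℝ ξ (v2 ξ) : ℝ) = 0 ∧ (inner ℝ (v1 ξ) (v2 ξ) : ℝ) = 0) ∧
    (∀ i : Fin N, ∀ ξ ∈ Λ i, ContDiffOn ℝ (⊤ : ℕ∞) (γ ξ) {R | ‖R‖ < ε}) ∧
    ∀ R : EuclideanSpace ℝ (Fin 3 × Fin 3),
      (∀ k l, R (k, l) = -R (l, k)) → ‖R‖ < ε →
      ∀ i : Fin N, ∀ k l,
        R (k, l) = ∑ ξ ∈ Λ i, (γ ξ R) ^ 2 * (v2 ξ k * ξ l - ξ k * v2 ξ l) := by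
  classical
  refine ⟨1/2, by norm_num, fun i => Finset.univ.image (Xi' i), V1', V2', gam',
    ?_, ?_, ?_, ?_⟩
  · -- disjointness
    intro i j hij
    rw [Finset.disjoint_left]
    intro ξ hi hj
    rw [Finset.mem_image] at hi hj
    obtain ⟨p, _, hp⟩ := hi
    obtain ⟨r, _, hr⟩ := hj
    have := (Xi'_eq (hp.trans hr.symm)).1
    exact hij (Fin.val_injective this)
  · -- orthonormality and rationality
    intro i ξ hξ
    rw [Finset.mem_image] at hξ
    obtain ⟨p, _, rfl⟩ := hξ
    exact facts' (i : ℕ) p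
  · -- smoothness
    intro i ξ hξ
    rw [Finset.mem_image] at hξ
    obtain ⟨p, _, rfl⟩ := hξ
    exact contDiff_gam' (i : ℕ) p
  · -- representation
    intro R hsk hnorm i k l
    have hb : ∀ m : Fin 3 × Fin 3, (0:ℝ) ≤ 1 + R m := by
      intro m
      have := abs_lt.mp (lt_of_le_of_lt (coord_le' R m) hnorm)
      linarith [this.1]
    have hs1 : Real.sqrt (1 + R (1,0)) ^ 2 = 1 + R (1,0) := Real.sq_sqrt (hb _)
    have hs2 : Real.sqrt (1 + R (2,1)) ^ 2 = 1 + R (2,1) := Real.sq_sqrt (hb _)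
    have hs3 : Real.sqrt (1 + R (2,0)) ^ 2 = 1 + R (2,0) := Real.sq_sqrt (hb _)
    have hcs := cs_sq' (i : ℕ)
    rw [Finset.sum_image (fun p _ r _ h => (Xi'_eq h).2)]
    rw [Fin.sum_univ_six]
    rw [gX0, gX1, gX2, gX3, gX4, gX5, V2X0, V2X1, V2X2, V2X3, V2X4, V2X5,
      Xi'_0, Xi'_1, Xi'_2, Xi'_3, Xi'_4, Xi'_5]
    fin_cases k <;> fin_cases l <;>
      simp [vec'_0, vec'_1, vec'_2, hs1, hs2, hs3, vec'] <;>
      first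
        | linear_combination (hsk 0 0)/2
        | linear_combination (hsk 1 1)/2
        | linear_combination (hsk 2 2)/2
        | linear_combination hsk 0 1 + R (1,0) * hcs
        | linear_combination (-(R (1,0))) * hcs
        | linear_combination hsk 1 2 + R (2,1) * hcs
        | linear_combination (-(R (2,1))) * hcs
        | linear_combination hsk 0 2 + R (2,0) * hcs
        | linear_combination (-(R (2,0))) * hcs
end
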